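/- Let ε > 0 and let z₁,…,z_k be linearly independent vectors in ℝᵐ with |z_i| ≤ 1 for all i, whose Gram–Schmidt orthogonalization z₁* = z₁, z₂*, …, z_k* satisfies |z_j*| ≥ ε for all j. If real numbers α₁,…,α_k satisfy |Σ_{i=1}^k α_i z_i| ≤ 1, then for every j, |α_j| ≤ (1/ε)·(1 + 1/ε)^{k−j}. -/

import Mathlib

/-!
Pairing `∑ αᵢ zᵢ` with `z_j*` kills every `zᵢ` with `i < j` (they lie in the span of
`z₁*, …, z_{j-1}*`) and turns `z_j` into `|z_j*|²`. Hence `ε |α_j| ≤ 1 + ∑_{i > j} |α_i|`, and a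
downward induction on `j` gives `1 + ∑_{i > j} |α_i| ≤ (1 + 1/ε)^{k-j}`.
-/

open Finset InnerProductSpace
open scoped InnerProductSpace

section GramSchmidt

variable {𝕜 E ι : Type*} [RCLike 𝕜] [NormedAddCommGroup E] [InnerProductSpace 𝕜 E]
  [LinearOrder ι] [LocallyFiniteOrderBot ι] [WellFoundedLT ι]

theorem inner_gramSchmidt_self (f : ι → E) (j : ι) :
    ⟪gramSchmidt 𝕜 f j, f j⟫_𝕜 = (‖gramSchmidt 𝕜 f j‖ : 𝕜) ^ 2 := by
  conv_lhs => rw [gramSchmidt_def'' 𝕜 f j]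
  rw [inner_add_right, inner_sum, inner_self_eq_norm_sq_to_K, add_eq_left]
  refine sum_eq_zero fun i hi => ?_
  rw [inner_smul_right, gramSchmidt_orthogonal 𝕜 f (mem_Iio.1 hi).ne', mul_zero]

theorem inner_gramSchmidt_sum_smul [Fintype ι] [LocallyFiniteOrderTop ι] (f : ι → E)
    (α : ι → 𝕜) (j : ι) :
    ⟪gramSchmidt 𝕜 f j, ∑ i, α i • f i⟫_𝕜
      = α j * (‖gramSchmidt 𝕜 f j‖ : 𝕜) ^ 2 + ∑ i ∈ Ioi j, α i * ⟪gramSchmidt 𝕜 f j, f i⟫_𝕜 := by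
  simp only [inner_sum, inner_smul_right]
  rw [← sum_subset (subset_univ (Ici j)), ← Ioi_insert, sum_insert notMem_Ioi_self,
    inner_gramSchmidt_self]
  intro i _ hi
  rw [gramSchmidt_inv_triangular 𝕜 f (not_le.1 (by simpa using hi)), mul_zero]

theorem norm_gramSchmidt_mul_norm_le [Fintype ι] [LocallyFiniteOrderTop ι] (f : ι → E)
    (α : ι → 𝕜) (j : ι) :
    ‖gramSchmidt 𝕜 f j‖ * ‖α j‖ ≤ ‖∑ i, α i • f i‖ + ∑ i ∈ Ioi j, ‖α i‖ * ‖f i‖ := by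
  set g := gramSchmidt 𝕜 f j
  rcases (norm_nonneg g).eq_or_lt with hg | hg
  · rw [← hg, zero_mul]
    positivity
  refine le_of_mul_le_mul_left ?_ hg
  calc ‖g‖ * (‖g‖ * ‖α j‖)
      = ‖⟪g, ∑ i, α i • f i⟫_𝕜 - ∑ i ∈ Ioi j, α i * ⟪g, f i⟫_𝕜‖ := by
        rw [inner_gramSchmidt_sum_smul, add_sub_cancel_right, norm_mul, norm_pow,
          RCLike.norm_ofReal, abs_norm]
        ring
    _ ≤ ‖g‖ * ‖∑ i, α i • f i‖ + ∑ i ∈ Ioi j, ‖α i‖ * (‖g‖ * ‖f i‖) := by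
        refine (norm_sub_le _ _).trans (add_le_add (norm_inner_le_norm _ _) ?_)
        refine (norm_sum_le _ _).trans (sum_le_sum fun i _ => ?_)
        rw [norm_mul]
        gcongr
        exact norm_inner_le_norm _ _
    _ = ‖g‖ * (‖∑ i, α i • f i‖ + ∑ i ∈ Ioi j, ‖α i‖ * ‖f i‖) := by
        rw [mul_add, mul_sum]
        congr 1
        exact sum_congr rfl fun i _ => by ring

end GramSchmidt

theorem one_add_sum_Ico_le_pow {b : ℕ → ℝ} {c : ℝ} {k : ℕ} (hc : 0 ≤ c)
    (hb : ∀ j < k, b j ≤ c * (1 + ∑ i ∈ Ico (j + 1) k, b i)) {j : ℕ} (hj : j ≤ k) :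
    1 + ∑ i ∈ Ico j k, b i ≤ (1 + c) ^ (k - j) := by
  induction hj using Nat.decreasingInduction with
  | self => simp
  | of_succ j hjk ih =>
    calc 1 + ∑ i ∈ Ico j k, b i = (1 + ∑ i ∈ Ico (j + 1) k, b i) + b j := by
          rw [sum_eq_sum_Ico_succ_bot hjk]; ring
      _ ≤ (1 + c) * (1 + ∑ i ∈ Ico (j + 1) k, b i) := by linarith [hb j hjk]
      _ ≤ (1 + c) * (1 + c) ^ (k - (j + 1)) := by gcongr
      _ = (1 + c) ^ (k - j) := by
          rw [← pow_succ', Nat.sub_add_eq, Nat.sub_add_cancel (by omega)]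

theorem le_mul_pow_of_le_mul_one_add_sum_Ioi {k : ℕ} {a : Fin k → ℝ} {c : ℝ} (hc : 0 ≤ c)
    (ha : ∀ j, a j ≤ c * (1 + ∑ i ∈ Ioi j, a i)) (j : Fin k) :
    a j ≤ c * (1 + c) ^ (k - 1 - (j : ℕ)) := by
  set b : ℕ → ℝ := fun n => if h : n < k then a ⟨n, h⟩ else 0
  have sum_Ioi_eq (j : Fin k) : ∑ i ∈ Ioi j, a i = ∑ i ∈ Ico ((j : ℕ) + 1) k, b i := by
    rw [Ico_add_one_left_eq_Ioo, ← Fin.map_valEmbedding_Ioi, sum_map]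
    exact sum_congr rfl fun i _ => by simp [b]
  have hb : ∀ n < k, b n ≤ c * (1 + ∑ i ∈ Ico (n + 1) k, b i) := fun n hn => by
    simpa [b, hn, sum_Ioi_eq] using ha ⟨n, hn⟩
  calc a j ≤ c * (1 + ∑ i ∈ Ico ((j : ℕ) + 1) k, b i) := by rw [← sum_Ioi_eq]; exact ha j
    _ ≤ c * (1 + c) ^ (k - ((j : ℕ) + 1)) := by gcongr; exact one_add_sum_Ico_le_pow hc hb j.2
    _ = c * (1 + c) ^ (k - 1 - (j : ℕ)) := by rw [Nat.sub_sub, Nat.add_comm]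

theorem stmt11 {m k : ℕ} (ε : ℝ) (hε : 0 < ε) (z : Fin k → EuclideanSpace ℝ (Fin m))
    (hnorm : ∀ i, ‖z i‖ ≤ 1)
    (hgs : ∀ j : Fin k,
      ε ≤ ‖@InnerProductSpace.gramSchmidt ℝ _ _ _ _ (Fin k) _ _ (inferInstanceAs (WellFoundedLT (Fin k))) z j‖)
    (α : Fin k → ℝ) (hα : ‖∑ i, α i • z i‖ ≤ 1) :
    ∀ j : Fin k, |α j| ≤ (1 / ε) * (1 + 1 / ε) ^ (k - 1 - (j : ℕ)) := by
  refine le_mul_pow_of_le_mul_one_add_sum_Ioi (by positivity) fun j => ?_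
  rw [one_div_mul_eq_div, le_div_iff₀' hε]
  calc ε * |α j| ≤ ‖gramSchmidt ℝ z j‖ * ‖α j‖ := by
        rw [Real.norm_eq_abs]; gcongr; exact hgs j
    _ ≤ ‖∑ i, α i • z i‖ + ∑ i ∈ Ioi j, ‖α i‖ * ‖z i‖ := norm_gramSchmidt_mul_norm_le z α j
    _ ≤ 1 + ∑ i ∈ Ioi j, |α i| := by
        gcongr with i
        rw [Real.norm_eq_abs]
        exact mul_le_of_le_one_right (abs_nonneg _) (hnorm i)
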